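/- arXiv:2204.09787 — 3 statements merged into one kernel-verified Lean document; each statement's English description precedes it below -/
import Mathlib

section
/- Let d and K be positive integers and B ≥ 0. Let c^0, c^1, …, c^K ∈ ℝ^d be vectors in the probability simplex (all entries nonnegative and summing to 1), let b^1, …, b^K ∈ ℝ^d have all entries in [0, B], and for each k ∈ {1,…,K} set c̄^k = (1/k)·Σ_{i=0}^{k-1} c^i. Then Σ_{k=1}^K ⟨b^k, c^k⟩ ≤ 2·d·B + 2·d·(log K)·max_{k∈{1,…,K}} ( k·⟨b^k, c̄^k⟩ ). -/
/-!
Work one coordinate at a time. With `T k = ∑_{j<k} c^j` (cumulative mass, so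
`k · c̄^k = T k`), the hypotheses give `b^k ≤ B` and `b^k · T k ≤ M`, where `M` is the
maximum on the right. Each term `b^k c^k` is dominated by the increment `φ (T (k+1)) - φ (T k)`
of the potential `φ t = B · min t 2 + 2 M · log (max t 2)`: below mass `2` the bound `b ≤ B`
is used, above it `b ≤ M / T k ≤ 2 M / T (k+1)` together with `(u - s) / u ≤ log u - log s`.
Telescoping and `T (K+1) ≤ K + 1` leave `2 B + 2 M log ((K + 1) / 2) ≤ 2 B + 2 M log K`,
and summing over the `d` coordinates gives the factor `d`.
-/

open Finset Real

lemma sub_div_le_log_sub {s u : ℝ} (hs : 0 < s) (hsu : s ≤ u) :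
    (u - s) / u ≤ log u - log s := by
  have hu : 0 < u := hs.trans_le hsu
  have h := one_sub_inv_le_log_of_pos (div_pos hu hs)
  rwa [log_div hu.ne' hs.ne', inv_div, one_sub_div hu.ne'] at h

lemma mul_sub_le_two_mul_log_sub {b t s u M : ℝ} (hb : 0 ≤ b) (ht : 0 < t) (hbt : b * t ≤ M)
    (hs : 0 < s) (hsu : s ≤ u) (hut : u ≤ 2 * t) :
    b * (u - s) ≤ 2 * M * (log u - log s) := by
  have hu : 0 < u := hs.trans_le hsu
  calc b * (u - s) = b * u * ((u - s) / u) := by field_simp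
    _ ≤ 2 * M * ((u - s) / u) :=
        mul_le_mul_of_nonneg_right (by nlinarith) (div_nonneg (by linarith) hu.le)
    _ ≤ 2 * M * (log u - log s) :=
        mul_le_mul_of_nonneg_left (sub_div_le_log_sub hs hsu) (by nlinarith)

noncomputable def telescopePotential (B M t : ℝ) : ℝ :=
  B * min t 2 + 2 * M * log (max t 2)

lemma mul_le_telescopePotential_sub {B M b c t : ℝ} (hb : b ∈ Set.Icc 0 B)
    (hc : c ∈ Set.Icc (0 : ℝ) 1) (hbt : b * t ≤ M) :
    b * c ≤ telescopePotential B M (t + c) - telescopePotential B M t := by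
  obtain ⟨hb0, hbB⟩ := hb
  obtain ⟨hc0, hc1⟩ := hc
  unfold telescopePotential
  rcases le_or_gt (t + c) 2 with hlow | hcross
  · rw [min_eq_left hlow, min_eq_left (by linarith), max_eq_right hlow,
      max_eq_right (by linarith)]
    nlinarith
  rcases le_or_gt 2 t with hhigh | hmid
  · rw [min_eq_right (by linarith), min_eq_right hhigh, max_eq_left (by linarith),
      max_eq_left hhigh]
    have := mul_sub_le_two_mul_log_sub (s := t) (u := t + c) hb0 (by linarith) hbt
      (by linarith) (le_add_of_nonneg_right hc0) (by linarith)
    linarith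
  · rw [min_eq_right (by linarith), min_eq_left hmid.le, max_eq_left (by linarith),
      max_eq_right hmid.le]
    have := mul_sub_le_two_mul_log_sub hb0 (by linarith) hbt two_pos hcross.le (by linarith)
    nlinarith

lemma sum_mul_le_of_mul_sum_range_le {K : ℕ} (hK : 0 < K) {B M : ℝ} {b c : ℕ → ℝ}
    (hb : ∀ k ∈ Icc 1 K, b k ∈ Set.Icc 0 B) (hc : ∀ j ≤ K, c j ∈ Set.Icc (0 : ℝ) 1)
    (hbM : ∀ k ∈ Icc 1 K, b k * ∑ j ∈ range k, c j ≤ M) :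
    ∑ k ∈ Icc 1 K, b k * c k ≤ 2 * B + 2 * M * log K := by
  set T : ℕ → ℝ := fun k => ∑ j ∈ range k, c j
  set φ := telescopePotential B M
  have h1K : 1 ∈ Icc 1 K := mem_Icc.mpr ⟨le_rfl, hK⟩
  have hT1 : 0 ≤ T 1 := by simpa [T] using (hc 0 (Nat.zero_le K)).1
  have hB : 0 ≤ B := (hb 1 h1K).1.trans (hb 1 h1K).2
  have hM : 0 ≤ M := (mul_nonneg (hb 1 h1K).1 hT1).trans (hbM 1 h1K)
  have hTK : T (K + 1) ≤ K + 1 := by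
    calc T (K + 1) ≤ ∑ _j ∈ range (K + 1), (1 : ℝ) :=
          sum_le_sum fun j hj => (hc j (Nat.lt_succ_iff.mp (mem_range.mp hj))).2
      _ = K + 1 := by simp
  have hK1 : (1 : ℝ) ≤ K := by exact_mod_cast hK
  have hφ_top : φ (T (K + 1)) ≤ 2 * B + 2 * M * log (K + 1) := by
    have := log_le_log (by positivity) (max_le hTK (by linarith : (2 : ℝ) ≤ K + 1))
    have := mul_le_mul_of_nonneg_left (min_le_right (T (K + 1)) 2) hB
    simp only [φ, telescopePotential]
    nlinarith
  have hφ_bot : 2 * M * log 2 ≤ φ (T 1) := by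
    have := log_le_log two_pos (le_max_right (T 1) 2)
    have := mul_nonneg hB (le_min hT1 zero_le_two)
    simp only [φ, telescopePotential]
    nlinarith
  have hlog : log (K + 1) - log 2 ≤ log K := by
    rw [← log_div (by positivity) two_ne_zero]
    exact log_le_log (by positivity) (by linarith)
  calc ∑ k ∈ Icc 1 K, b k * c k ≤ ∑ k ∈ Icc 1 K, (φ (T (k + 1)) - φ (T k)) := by
        refine sum_le_sum fun k hk => ?_
        have hkK := (mem_Icc.mp hk).2
        rw [show T (k + 1) = T k + c k from sum_range_succ c k]
        exact mul_le_telescopePotential_sub (hb k hk) (hc k hkK) (hbM k hk)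
    _ = φ (T (K + 1)) - φ (T 1) := sum_Icc_sub hK fun k => φ (T k)
    _ ≤ 2 * B + 2 * M * log K := by nlinarith

lemma natCast_mul_sum_mul_mean {ι : Type*} [Fintype ι] {k : ℕ} (hk : k ≠ 0) (b : ι → ℝ)
    (c : ℕ → ι → ℝ) :
    (k : ℝ) * ∑ i, b i * ((1 / (k : ℝ)) * ∑ j ∈ range k, c j i) =
      ∑ i, b i * ∑ j ∈ range k, c j i := by
  rw [mul_sum]
  refine sum_congr rfl fun i _ => ?_
  field_simp

theorem stmt0_general (d K : ℕ) (hK : 0 < K) (B : ℝ)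
    (c b cbar : ℕ → Fin d → ℝ)
    (hc : ∀ k ≤ K, (∀ i, 0 ≤ c k i) ∧ ∑ i, c k i = 1)
    (hb : ∀ k, 1 ≤ k → k ≤ K → ∀ i, b k i ∈ Set.Icc (0 : ℝ) B)
    (hcbar : ∀ k, 1 ≤ k → k ≤ K →
      ∀ i, cbar k i = (1 / (k : ℝ)) * ∑ j ∈ Finset.range k, c j i) :
    ∑ k ∈ Finset.Icc 1 K, ∑ i, b k i * c k i ≤
      2 * d * B + 2 * d * Real.log K *
        (Finset.Icc 1 K).sup' (Finset.nonempty_Icc.mpr hK)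
          (fun k => (k : ℝ) * ∑ i, b k i * cbar k i) := by
  set M := (Finset.Icc 1 K).sup' (Finset.nonempty_Icc.mpr hK)
    (fun k => (k : ℝ) * ∑ i, b k i * cbar k i)
  have hc_le_one : ∀ i, ∀ j ≤ K, c j i ∈ Set.Icc (0 : ℝ) 1 := fun i j hj =>
    ⟨(hc j hj).1 i, (hc j hj).2 ▸ single_le_sum (fun i' _ => (hc j hj).1 i') (mem_univ i)⟩
  have hbM : ∀ i, ∀ k ∈ Icc 1 K, b k i * ∑ j ∈ range k, c j i ≤ M := by
    intro i k hk
    obtain ⟨hk1, hkK⟩ := mem_Icc.mp hk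
    have hmass : (k : ℝ) * ∑ i, b k i * cbar k i = ∑ i, b k i * ∑ j ∈ range k, c j i := by
      simp only [hcbar k hk1 hkK]
      exact natCast_mul_sum_mul_mean (by omega) (b k) c
    refine le_trans ?_ (hmass ▸ le_sup' (fun k : ℕ => (k : ℝ) * ∑ i, b k i * cbar k i) hk)
    refine single_le_sum (f := fun i' => b k i' * ∑ j ∈ range k, c j i')
      (fun i' _ => mul_nonneg (hb k hk1 hkK i').1 ?_) (mem_univ i)
    exact sum_nonneg fun j hj => (hc_le_one i' j (by have := mem_range.mp hj; omega)).1
  calc ∑ k ∈ Icc 1 K, ∑ i, b k i * c k i = ∑ i, ∑ k ∈ Icc 1 K, b k i * c k i := sum_comm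
    _ ≤ ∑ _i : Fin d, (2 * B + 2 * M * log K) := sum_le_sum fun i _ =>
        sum_mul_le_of_mul_sum_range_le hK
          (fun k hk => hb k (mem_Icc.mp hk).1 (mem_Icc.mp hk).2 i) (hc_le_one i) (hbM i)
    _ = 2 * d * B + 2 * d * log K * M := by
        rw [sum_const, card_univ, Fintype.card_fin, nsmul_eq_mul]; ring

/-- Deterministic core of the "Telescope of Error" lemma: if `c^0, …, c^K` lie in the
probability simplex of `ℝ^d`, `b^1, …, b^K` have entries in `[0, B]`, and
`c̄^k = (1/k) · ∑_{i=0}^{k-1} c^i`, then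
`∑_{k=1}^K ⟨b^k, c^k⟩ ≤ 2 d B + 2 d (log K) · max_{1 ≤ k ≤ K} (k · ⟨b^k, c̄^k⟩)`. -/
theorem stmt0 (d K : ℕ) (hd : 0 < d) (hK : 0 < K) (B : ℝ) (hB : 0 ≤ B)
    (c b cbar : ℕ → Fin d → ℝ)
    (hc : ∀ k ≤ K, (∀ i, 0 ≤ c k i) ∧ ∑ i, c k i = 1)
    (hb : ∀ k, 1 ≤ k → k ≤ K → ∀ i, b k i ∈ Set.Icc (0 : ℝ) B)
    (hcbar : ∀ k, 1 ≤ k → k ≤ K →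
      ∀ i, cbar k i = (1 / (k : ℝ)) * ∑ j ∈ Finset.range k, c j i) :
    ∑ k ∈ Finset.Icc 1 K, ∑ i, b k i * c k i ≤
      2 * d * B + 2 * d * Real.log K *
        (Finset.Icc 1 K).sup' (Finset.nonempty_Icc.mpr hK)
          (fun k => (k : ℝ) * ∑ i, b k i * cbar k i) :=
  stmt0_general d K hK B c b cbar hc hb hcbar
end

section
/- Let H be a real Hilbert space, let k be a positive integer, and let (D_j)_{j=1}^k be an H-valued martingale difference sequence with respect to a filtration (F_j)_{j≥0} on a probability space (i.e., each D_j is F_j-measurable and Bochner integrable with E[D_j | F_{j-1}] = 0 almost surely), and suppose ‖D_j‖_H ≤ 2 almost surely for every j. Then for every δ ∈ (0,1), with probability at least 1 − δ, ‖ (1/k)·Σ_{j=1}^k D_j ‖_H ≤ √(8·log(2/δ)) · k^{−1/2}. -/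
open MeasureTheory Real Set
open scoped RealInnerProductSpace

/-!
Pinelis' argument. Since `‖x + d‖²` is affine in `⟪x, d⟫`, convexity of `cosh ∘ sqrt` bounds
`cosh (l * ‖x + d‖)`, for `‖d‖ ≤ c`, by `cosh (l * ‖x‖) * cosh (l * c)` plus a term that is
linear in `d`; for a martingale difference `d` that term has zero expectation. Hence
`E cosh (l * ‖S_k‖) ≤ cosh (l * c) ^ k ≤ exp (k l² c² / 2)`, and Markov's inequality with the
optimal `l` gives the tail `2 exp (-t² / (2 k c²))`, which equals `δ` for `c = 2` and
`t = √(8 k log (2 / δ))`.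
-/

namespace Real

theorem sinh_le_mul_cosh {x : ℝ} (hx : 0 ≤ x) : sinh x ≤ x * cosh x := by
  have hd (y : ℝ) : HasDerivAt (fun y => y * cosh y - sinh y) (y * sinh y) y :=
    (((hasDerivAt_id' y).mul (hasDerivAt_cosh y)).sub (hasDerivAt_sinh y)).congr_deriv (by ring)
  have hmono : MonotoneOn (fun y => y * cosh y - sinh y) (Ici 0) := by
    refine monotoneOn_of_deriv_nonneg (convex_Ici 0)
      (fun y _ => (hd y).continuousAt.continuousWithinAt)
      (fun y _ => (hd y).differentiableAt.differentiableWithinAt) fun y hy => ?_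
    rw [interior_Ici] at hy
    rw [(hd y).deriv]
    exact mul_nonneg hy.le (sinh_nonneg_iff.2 hy.le)
  simpa using hmono self_mem_Ici hx hx

theorem monotoneOn_sinh_div : MonotoneOn (fun x => sinh x / x) (Ioi 0) := by
  have hd {y : ℝ} (hy : y ≠ 0) :
      HasDerivAt (fun x => sinh x / x) ((cosh y * y - sinh y * 1) / y ^ 2) y :=
    (hasDerivAt_sinh y).div (hasDerivAt_id y) hy
  refine monotoneOn_of_deriv_nonneg (convex_Ioi 0)
    (fun y hy => (hd (ne_of_gt hy)).continuousAt.continuousWithinAt) ?_ fun y hy => ?_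
  · rw [interior_Ioi]
    exact fun y hy => (hd (ne_of_gt hy)).differentiableAt.differentiableWithinAt
  · rw [interior_Ioi] at hy
    rw [(hd (ne_of_gt hy)).deriv]
    have := sinh_le_mul_cosh hy.le
    exact div_nonneg (by linarith) (sq_nonneg y)

theorem convexOn_cosh_sqrt : ConvexOn ℝ (Ici 0) fun s => cosh √s := by
  have hd {s : ℝ} (hs : 0 < s) :
      HasDerivAt (fun s => cosh √s) (sinh √s * (1 / (2 * √s))) s :=
    (hasDerivAt_cosh √s).comp s (hasDerivAt_sqrt hs.ne')
  refine MonotoneOn.convexOn_of_deriv (convex_Ici 0)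
    (continuous_cosh.comp continuous_sqrt).continuousOn ?_ ?_
  · rw [interior_Ici]
    exact fun s hs => (hd hs).differentiableAt.differentiableWithinAt
  · rw [interior_Ici]
    intro a ha b hb hab
    have hsa : 0 < √a := sqrt_pos.2 ha
    have hsb : 0 < √b := sqrt_pos.2 hb
    have := monotoneOn_sinh_div hsa hsb (sqrt_le_sqrt hab)
    simp only [(hd ha).deriv, (hd hb).deriv]
    calc sinh √a * (1 / (2 * √a)) = sinh √a / √a / 2 := by ring
      _ ≤ sinh √b / √b / 2 := by gcongr
      _ = sinh √b * (1 / (2 * √b)) := by ring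

-- The chord of `cosh ∘ sqrt` between `l² (r - c)²` and `l² (r + c)²`.
theorem cosh_sqrt_le_of_abs_le (l : ℝ) {r c u : ℝ} (hr : 0 ≤ r) (hc : 0 < c) (hu : |u| ≤ c * r) :
    cosh √(l ^ 2 * (r ^ 2 + 2 * u + c ^ 2)) ≤
      cosh (l * r) * cosh (l * c) + sinh (l * c) / c * (sinh (l * r) / r) * u := by
  rcases hr.eq_or_lt with rfl | hr
  · have hu0 : u = 0 := abs_nonpos_iff.1 (by simpa using hu)
    simp [hu0, show l ^ 2 * c ^ 2 = (l * c) ^ 2 by ring, sqrt_sq_eq_abs]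
  obtain ⟨hu₁, hu₂⟩ := abs_le.1 hu
  set θ := (c * r - u) / (2 * c * r) with hθ
  have hθ₀ : 0 ≤ θ := div_nonneg (by linarith) (by positivity)
  have hθ₁ : 0 ≤ 1 - θ := by
    rw [sub_nonneg, div_le_one (by positivity)]; linarith
  have hchord := convexOn_cosh_sqrt.2 (mem_Ici.2 (by positivity : 0 ≤ l ^ 2 * (r - c) ^ 2))
    (mem_Ici.2 (by positivity : 0 ≤ l ^ 2 * (r + c) ^ 2)) hθ₀ hθ₁ (add_sub_cancel θ 1)
  have hcomb : θ * (l ^ 2 * (r - c) ^ 2) + (1 - θ) * (l ^ 2 * (r + c) ^ 2)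
      = l ^ 2 * (r ^ 2 + 2 * u + c ^ 2) := by
    rw [hθ]; field_simp; ring
  have hsqrt (a : ℝ) : cosh √(l ^ 2 * a ^ 2) = cosh (l * a) := by
    rw [← mul_pow, sqrt_sq_eq_abs, cosh_abs]
  simp only [smul_eq_mul, hcomb, hsqrt] at hchord
  refine hchord.trans_eq ?_
  rw [mul_sub, mul_add, cosh_sub, cosh_add, hθ]
  field_simp
  ring

end Real

section Gradient

variable {H : Type*} [NormedAddCommGroup H] [InnerProductSpace ℝ H]

/-- `l⁻¹` times the gradient of `x ↦ cosh (l * ‖x‖)`; it vanishes at `0` because `0 / 0 = 0`. -/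
noncomputable def coshNormGrad (l : ℝ) (x : H) : H := (sinh (l * ‖x‖) / ‖x‖) • x

theorem norm_coshNormGrad {l : ℝ} (hl : 0 ≤ l) (x : H) :
    ‖coshNormGrad l x‖ = sinh (l * ‖x‖) := by
  rcases eq_or_ne x 0 with rfl | hx
  · simp [coshNormGrad]
  have hx' : 0 < ‖x‖ := norm_pos_iff.2 hx
  rw [coshNormGrad, norm_smul, norm_div, Real.norm_of_nonneg (sinh_nonneg_iff.2 (by positivity)),
    norm_norm, div_mul_cancel₀ _ hx'.ne']

theorem MeasureTheory.StronglyMeasurable.coshNormGrad {Ω : Type*} {m : MeasurableSpace Ω}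
    {X : Ω → H} (hX : StronglyMeasurable X) (l : ℝ) :
    StronglyMeasurable fun ω => coshNormGrad l (X ω) :=
  .smul (((measurable_sinh.comp (measurable_const.mul hX.norm.measurable)).div
    hX.norm.measurable).stronglyMeasurable) hX

theorem cosh_mul_norm_add_le (l : ℝ) {c : ℝ} (hc : 0 < c) (x : H) {d : H} (hd : ‖d‖ ≤ c) :
    cosh (l * ‖x + d‖) ≤
      cosh (l * ‖x‖) * cosh (l * c) + sinh (l * c) / c * ⟪coshNormGrad l x, d⟫ := by
  have hu : |⟪x, d⟫| ≤ c * ‖x‖ :=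
    (abs_real_inner_le_norm x d).trans (by rw [mul_comm]; gcongr)
  have hsq : ‖x + d‖ ^ 2 ≤ ‖x‖ ^ 2 + 2 * ⟪x, d⟫ + c ^ 2 := by
    rw [norm_add_sq_real]; gcongr
  calc cosh (l * ‖x + d‖) = cosh √(l ^ 2 * ‖x + d‖ ^ 2) := by
        rw [← mul_pow, sqrt_sq_eq_abs, cosh_abs]
    _ ≤ cosh √(l ^ 2 * (‖x‖ ^ 2 + 2 * ⟪x, d⟫ + c ^ 2)) := by
        rw [cosh_le_cosh, abs_of_nonneg (sqrt_nonneg _), abs_of_nonneg (sqrt_nonneg _)]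
        gcongr
    _ ≤ _ := cosh_sqrt_le_of_abs_le l (norm_nonneg x) hc hu
    _ = _ := by rw [coshNormGrad, real_inner_smul_left, mul_assoc]

end Gradient

theorem integral_inner_eq_zero_of_condExp_eq_zero {Ω H : Type*} [NormedAddCommGroup H]
    [InnerProductSpace ℝ H] [CompleteSpace H] {m m0 : MeasurableSpace Ω} (hm : m ≤ m0)
    {μ : Measure Ω} [IsFiniteMeasure μ] {Y D : Ω → H} (hY : StronglyMeasurable[m] Y)
    (hYD : Integrable (fun ω => ⟪Y ω, D ω⟫) μ) (hD : Integrable D μ) (hDm : μ[D|m] =ᵐ[μ] 0) :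
    ∫ ω, ⟪Y ω, D ω⟫ ∂μ = 0 := by
  have hpull := condExp_bilin_of_stronglyMeasurable_left (m := m) (innerSL ℝ) hY hYD hD
  calc ∫ ω, ⟪Y ω, D ω⟫ ∂μ = ∫ ω, (μ[fun ω => ⟪Y ω, D ω⟫|m]) ω ∂μ := (integral_condExp hm).symm
    _ = ∫ ω, ⟪Y ω, (μ[D|m]) ω⟫ ∂μ := integral_congr_ae hpull
    _ = ∫ ω, ⟪Y ω, (0 : Ω → H) ω⟫ ∂μ :=
        integral_congr_ae (hDm.mono fun ω h => congrArg (⟪Y ω, ·⟫) h)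
    _ = 0 := by simp

theorem integrable_cosh_mul_norm {Ω H : Type*} [NormedAddCommGroup H] {m0 : MeasurableSpace Ω}
    {μ : Measure Ω} [IsFiniteMeasure μ] {X : Ω → H} (hX : AEStronglyMeasurable X μ) {B : ℝ}
    (hB : ∀ᵐ ω ∂μ, ‖X ω‖ ≤ B) (l : ℝ) : Integrable (fun ω => cosh (l * ‖X ω‖)) μ := by
  refine .of_bound ((continuous_cosh.comp (continuous_const.mul continuous_norm)
    ).comp_aestronglyMeasurable hX) (cosh (l * B)) ?_
  filter_upwards [hB] with ω hω
  rw [Real.norm_of_nonneg (cosh_pos _).le, cosh_le_cosh, abs_mul, abs_mul, abs_norm]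
  gcongr
  exact hω.trans (le_abs_self B)

section MartingaleDifference

variable {Ω H : Type*} {m0 : MeasurableSpace Ω} [NormedAddCommGroup H] {μ : Measure Ω}
  {ℱ : Filtration ℕ m0} {k : ℕ} {D : ℕ → Ω → H} {c : ℝ}

theorem stronglyMeasurable_sum_Icc
    (hmeas : ∀ j, 1 ≤ j → j ≤ k → StronglyMeasurable[ℱ j] (D j)) {n : ℕ} (hn : n ≤ k) :
    StronglyMeasurable[ℱ n] fun ω => ∑ j ∈ Finset.Icc 1 n, D j ω := by
  refine Finset.stronglyMeasurable_fun_sum _ fun j hj => ?_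
  obtain ⟨hj₁, hjn⟩ := Finset.mem_Icc.1 hj
  exact (hmeas j hj₁ (hjn.trans hn)).mono (ℱ.mono hjn)

theorem ae_norm_sum_Icc_le (hbdd : ∀ j, 1 ≤ j → j ≤ k → ∀ᵐ ω ∂μ, ‖D j ω‖ ≤ c) {n : ℕ}
    (hn : n ≤ k) : ∀ᵐ ω ∂μ, ‖∑ j ∈ Finset.Icc 1 n, D j ω‖ ≤ n * c := by
  have hall : ∀ᵐ ω ∂μ, ∀ j ∈ Finset.Icc 1 n, ‖D j ω‖ ≤ c :=
    (Filter.eventually_all_finset _).2 fun j hj =>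
      hbdd j (Finset.mem_Icc.1 hj).1 ((Finset.mem_Icc.1 hj).2.trans hn)
  filter_upwards [hall] with ω hω
  calc ‖∑ j ∈ Finset.Icc 1 n, D j ω‖ ≤ ∑ j ∈ Finset.Icc 1 n, ‖D j ω‖ := norm_sum_le _ _
    _ ≤ (Finset.Icc 1 n).card • c := Finset.sum_le_card_nsmul _ _ _ hω
    _ = n * c := by simp

variable [InnerProductSpace ℝ H] [CompleteSpace H]
  (hmeas : ∀ j, 1 ≤ j → j ≤ k → StronglyMeasurable[ℱ j] (D j))
  (hint : ∀ j, 1 ≤ j → j ≤ k → Integrable (D j) μ)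
  (hmds : ∀ j, 1 ≤ j → j ≤ k → μ[D j | ℱ (j - 1)] =ᵐ[μ] 0)
  (hbdd : ∀ j, 1 ≤ j → j ≤ k → ∀ᵐ ω ∂μ, ‖D j ω‖ ≤ c)
include hmeas hint hmds hbdd

theorem integral_cosh_mul_norm_sum_Icc_le [IsProbabilityMeasure μ] (hc : 0 < c) {l : ℝ}
    (hl : 0 ≤ l) {n : ℕ} (hn : n ≤ k) :
    ∫ ω, cosh (l * ‖∑ j ∈ Finset.Icc 1 n, D j ω‖) ∂μ ≤ cosh (l * c) ^ n := by
  induction n with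
  | zero => simp
  | succ n ih =>
    set S := fun ω => ∑ j ∈ Finset.Icc 1 n, D j ω
    set Y := fun ω => coshNormGrad l (S ω)
    have hS : StronglyMeasurable[ℱ n] S := stronglyMeasurable_sum_Icc hmeas (by omega)
    have hSb : ∀ᵐ ω ∂μ, ‖S ω‖ ≤ n * c := ae_norm_sum_Icc_le hbdd (by omega)
    have hYb : ∀ᵐ ω ∂μ, ‖Y ω‖ ≤ sinh (l * (n * c)) := by
      filter_upwards [hSb] with ω hω
      rw [norm_coshNormGrad hl]
      exact sinh_le_sinh.2 (by gcongr)
    have hD := hint (n + 1) (by omega) hn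
    have hYD : Integrable (fun ω => ⟪Y ω, D (n + 1) ω⟫) μ :=
      (innerSL ℝ).integrable_of_bilin_of_bdd_left _
        ((hS.coshNormGrad l).mono (ℱ.le n)).aestronglyMeasurable hYb hD
    have horth : ∫ ω, ⟪Y ω, D (n + 1) ω⟫ ∂μ = 0 :=
      integral_inner_eq_zero_of_condExp_eq_zero (ℱ.le n) (hS.coshNormGrad l) hYD hD
        (by simpa using hmds (n + 1) (by omega) hn)
    have hstep : ∀ᵐ ω ∂μ, cosh (l * ‖∑ j ∈ Finset.Icc 1 (n + 1), D j ω‖) ≤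
        cosh (l * ‖S ω‖) * cosh (l * c) + sinh (l * c) / c * ⟪Y ω, D (n + 1) ω⟫ := by
      filter_upwards [hbdd (n + 1) (by omega) hn] with ω hω
      rw [Finset.sum_Icc_succ_top (by omega)]
      exact cosh_mul_norm_add_le l hc _ hω
    have hcoshS := integrable_cosh_mul_norm (hS.mono (ℱ.le n)).aestronglyMeasurable hSb l
    calc ∫ ω, cosh (l * ‖∑ j ∈ Finset.Icc 1 (n + 1), D j ω‖) ∂μ
        ≤ ∫ ω, (cosh (l * ‖S ω‖) * cosh (l * c) + sinh (l * c) / c * ⟪Y ω, D (n + 1) ω⟫) ∂μ :=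
          integral_mono_ae (integrable_cosh_mul_norm
            ((stronglyMeasurable_sum_Icc hmeas hn).mono (ℱ.le _)).aestronglyMeasurable
            (ae_norm_sum_Icc_le hbdd hn) l) ((hcoshS.mul_const _).add (hYD.const_mul _)) hstep
      _ = (∫ ω, cosh (l * ‖S ω‖) ∂μ) * cosh (l * c) := by
          rw [integral_add (hcoshS.mul_const _) (hYD.const_mul _), integral_mul_const,
            integral_const_mul, horth, mul_zero, add_zero]
      _ ≤ cosh (l * c) ^ n * cosh (l * c) := by
          gcongr
          exact ih (by omega)
      _ = cosh (l * c) ^ (n + 1) := (pow_succ _ n).symm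

theorem measureReal_le_norm_sum_Icc_le [IsProbabilityMeasure μ] (hk : 0 < k) (hc : 0 < c)
    {t : ℝ} (ht : 0 ≤ t) :
    μ.real {ω | t ≤ ‖∑ j ∈ Finset.Icc 1 k, D j ω‖} ≤ 2 * exp (-(t ^ 2 / (2 * k * c ^ 2))) := by
  set S := fun ω => ∑ j ∈ Finset.Icc 1 k, D j ω
  have hk' : (0 : ℝ) < k := Nat.cast_pos.2 hk
  -- minimises `k * (l * c) ^ 2 / 2 - l * t`, the exponent of the Chernoff bound below
  set l := t / (k * c ^ 2) with hl_def
  have hl : 0 ≤ l := by positivity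
  have hSint := integrable_cosh_mul_norm
    ((stronglyMeasurable_sum_Icc hmeas le_rfl).mono (ℱ.le k)).aestronglyMeasurable
    (ae_norm_sum_Icc_le hbdd le_rfl) l
  have hmarkov := mul_meas_ge_le_integral_of_nonneg
    (ae_of_all μ fun ω => (cosh_pos (l * ‖S ω‖)).le) hSint (cosh (l * t))
  have hmgf : ∫ ω, cosh (l * ‖S ω‖) ∂μ ≤ exp (k * (l * c) ^ 2 / 2) := by
    calc ∫ ω, cosh (l * ‖S ω‖) ∂μ ≤ cosh (l * c) ^ k :=
          integral_cosh_mul_norm_sum_Icc_le hmeas hint hmds hbdd hc hl le_rfl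
      _ ≤ exp ((l * c) ^ 2 / 2) ^ k := by
          gcongr
          exact cosh_le_exp_half_sq _
      _ = exp (k * (l * c) ^ 2 / 2) := by rw [← exp_nat_mul, mul_div_assoc]
  have hsub : μ.real {ω | t ≤ ‖S ω‖} ≤ μ.real {ω | cosh (l * t) ≤ cosh (l * ‖S ω‖)} :=
    measureReal_mono fun ω hω => by
      rw [mem_ofPred_eq, cosh_le_cosh, abs_of_nonneg (by positivity),
        abs_of_nonneg (by positivity)]
      exact mul_le_mul_of_nonneg_left hω hl
  have hcosh : exp (l * t) / 2 ≤ cosh (l * t) := by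
    rw [cosh_eq]; linarith [exp_pos (-(l * t))]
  have hexponent : k * (l * c) ^ 2 / 2 - l * t = -(t ^ 2 / (2 * k * c ^ 2)) := by
    rw [hl_def]; field_simp; ring
  calc μ.real {ω | t ≤ ‖S ω‖} ≤ exp (k * (l * c) ^ 2 / 2) / cosh (l * t) := by
        rw [le_div_iff₀ (cosh_pos _), mul_comm]
        exact (mul_le_mul_of_nonneg_left hsub (cosh_pos _).le).trans (hmarkov.trans hmgf)
    _ ≤ exp (k * (l * c) ^ 2 / 2) / (exp (l * t) / 2) := by gcongr
    _ = 2 * exp (-(t ^ 2 / (2 * k * c ^ 2))) := by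
        rw [← hexponent, exp_sub]; field_simp

theorem ofReal_one_sub_le_measure_norm_sum_Icc_le [IsProbabilityMeasure μ] (hk : 0 < k)
    (hc : 0 < c) {t : ℝ} (ht : 0 ≤ t) :
    ENNReal.ofReal (1 - 2 * exp (-(t ^ 2 / (2 * k * c ^ 2)))) ≤
      μ {ω | ‖∑ j ∈ Finset.Icc 1 k, D j ω‖ ≤ t} := by
  set S := fun ω => ∑ j ∈ Finset.Icc 1 k, D j ω
  have hmeasurable : MeasurableSet {ω | t ≤ ‖S ω‖} :=
    measurableSet_le measurable_const
      ((stronglyMeasurable_sum_Icc hmeas le_rfl).mono (ℱ.le k)).norm.measurable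
  calc ENNReal.ofReal (1 - 2 * exp (-(t ^ 2 / (2 * k * c ^ 2))))
      ≤ ENNReal.ofReal (μ.real {ω | t ≤ ‖S ω‖}ᶜ) := by
        rw [measureReal_compl hmeasurable, probReal_univ]
        gcongr
        exact measureReal_le_norm_sum_Icc_le hmeas hint hmds hbdd hk hc ht
    _ = μ {ω | t ≤ ‖S ω‖}ᶜ := ofReal_measureReal
    _ ≤ μ {ω | ‖S ω‖ ≤ t} := measure_mono fun ω hω =>
        (not_le.1 (show ¬t ≤ ‖S ω‖ from hω)).le

end MartingaleDifference

/-- Concentration of averaged bounded Hilbert-space-valued martingale differences: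
if `D_1, …, D_k` is a martingale difference sequence with `‖D_j‖ ≤ 2` a.s., then with
probability at least `1 − δ`,
`‖(1/k) ∑_{j=1}^k D_j‖ ≤ √(8 log(2/δ)) · k^{−1/2}`. -/
theorem stmt3 {Ω H : Type*} [MeasurableSpace Ω]
    [NormedAddCommGroup H] [InnerProductSpace ℝ H] [CompleteSpace H]
    (μ : Measure Ω) [IsProbabilityMeasure μ]
    (ℱ : Filtration ℕ (inferInstance : MeasurableSpace Ω))
    (k : ℕ) (hk : 0 < k) (D : ℕ → Ω → H)
    (hmeas : ∀ j, 1 ≤ j → j ≤ k → StronglyMeasurable[ℱ j] (D j))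
    (hint : ∀ j, 1 ≤ j → j ≤ k → Integrable (D j) μ)
    (hmds : ∀ j, 1 ≤ j → j ≤ k → μ[D j | ℱ (j - 1)] =ᵐ[μ] 0)
    (hbdd : ∀ j, 1 ≤ j → j ≤ k → ∀ᵐ ω ∂μ, ‖D j ω‖ ≤ 2)
    (δ : ℝ) (hδ0 : 0 < δ) (hδ1 : δ < 1) :
    ENNReal.ofReal (1 - δ) ≤
      μ {ω | ‖(1 / (k : ℝ)) • ∑ j ∈ Finset.Icc 1 k, D j ω‖ ≤
        Real.sqrt (8 * Real.log (2 / δ)) * (k : ℝ) ^ (-(1 : ℝ) / 2)} := by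
  set L := log (2 / δ)
  have hL : 0 < L := log_pos (by rw [lt_div_iff₀ hδ0]; linarith)
  have hk' : (0 : ℝ) < k := Nat.cast_pos.2 hk
  set t := √(8 * k * L) with ht_def
  have hprob : 2 * exp (-(t ^ 2 / (2 * k * 2 ^ 2))) = δ := by
    rw [sq_sqrt (by positivity), show 8 * (k : ℝ) * L / (2 * k * 2 ^ 2) = L by field_simp; ring,
      exp_neg, exp_log (by positivity)]
    field_simp
  have hscale : 1 / (k : ℝ) * t = √(8 * L) * (k : ℝ) ^ (-(1 : ℝ) / 2) := by
    rw [ht_def, neg_div, rpow_neg hk'.le, ← sqrt_eq_rpow,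
      show 8 * (k : ℝ) * L = 8 * L * k by ring, sqrt_mul (by positivity)]
    field_simp
    rw [sq_sqrt hk'.le]
  calc ENNReal.ofReal (1 - δ) = ENNReal.ofReal (1 - 2 * exp (-(t ^ 2 / (2 * k * 2 ^ 2)))) := by
        rw [hprob]
    _ ≤ μ {ω | ‖∑ j ∈ Finset.Icc 1 k, D j ω‖ ≤ t} :=
        ofReal_one_sub_le_measure_norm_sum_Icc_le hmeas hint hmds hbdd hk two_pos (sqrt_nonneg _)
    _ ≤ _ := measure_mono fun ω hω => by
        rw [mem_ofPred_eq, norm_smul, Real.norm_of_nonneg (by positivity), ← hscale]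
        exact mul_le_mul_of_nonneg_left hω (by positivity)
end

section
/- Let (S, μ_S) and (O, μ_O) be σ-finite measure spaces. Let E : O × S → [0,∞) be measurable with ∫_O E(o,s) dμ_O(o) = 1 for every s ∈ S. Let ψ_1, …, ψ_d be probability densities on S with respect to μ_S, and define ν_j(o) = ∫_S E(o,s)·ψ_j(s) dμ_S(s) for j ∈ {1,…,d}. Let K̃ : O × O → ℝ be bounded measurable, define Λ ∈ ℝ^{d×d} by Λ_{ij} = ∫∫ K̃(o,o′)·ν_i(o)·ν_j(o′) dμ_O(o)dμ_O(o′), and assume Λ is invertible. Define Z(s,o) = Σ_{i,j} ψ_i(s)·[Λ^{-1}]_{ij}·∫_O K̃(o′,o)·ν_j(o′) dμ_O(o′). Then for every ℓ ∈ {1,…,d} and every s ∈ S, ∫_O Z(s,o)·ν_ℓ(o) dμ_O(o) = ψ_ℓ(s); consequently, for every f in the linear span of {ψ_1,…,ψ_d}, writing (𝕆f)(o) = ∫_S E(o,s)·f(s) dμ_S(s), one has ∫_O Z(s,o)·(𝕆f)(o) dμ_O(o) = f(s) for every s ∈ S. -/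
/-!
The functions `g_j(o) = ∫ K̃(o', o) ν_j(o') dμ_O(o')` are bounded, and Fubini turns the pairing
`∫ g_j ν_ℓ` into the cross-moment `Λ_{jℓ}`. Since `Z(s, ·) = ∑_j (ψ(s)ᵀ Λ⁻¹)_j g_j`, pairing it
with `ν_ℓ` gives `(ψ(s)ᵀ Λ⁻¹ Λ)_ℓ = ψ_ℓ(s)`. The emission operator is linear up to null sets, which
extends the identity from the `ψ_ℓ` to their span.
-/

open MeasureTheory Matrix

section BoundedKernel

variable {O : Type*} [MeasurableSpace O] {μ : Measure O} {K : O → O → ℝ}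

lemma norm_integral_kernel_mul_le {C : ℝ} (hC : ∀ x y, |K x y| ≤ C) {ν : O → ℝ}
    (hν : Integrable ν μ) (o : O) :
    ‖∫ o', K o' o * ν o' ∂μ‖ ≤ C * ∫ o', ‖ν o'‖ ∂μ := by
  rw [← integral_const_mul]
  refine norm_integral_le_of_norm_le (hν.norm.const_mul C) (Filter.Eventually.of_forall fun o' => ?_)
  rw [norm_mul, Real.norm_eq_abs]
  exact mul_le_mul_of_nonneg_right (hC o' o) (norm_nonneg _)

variable [SFinite μ]

lemma aestronglyMeasurable_integral_kernel_mul (hK : Measurable fun p : O × O => K p.1 p.2)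
    {ν : O → ℝ} (hν : Integrable ν μ) :
    AEStronglyMeasurable (fun o => ∫ o', K o' o * ν o' ∂μ) μ :=
  AEStronglyMeasurable.integral_prod_right' (f := fun p : O × O => K p.2 p.1 * ν p.2)
    ((hK.comp measurable_swap).aestronglyMeasurable.mul hν.1.comp_snd)

lemma integrable_integral_kernel_mul (hK : Measurable fun p : O × O => K p.1 p.2)
    (hKbdd : ∃ C, ∀ x y, |K x y| ≤ C) {ν ν' : O → ℝ} (hν : Integrable ν μ)
    (hν' : Integrable ν' μ) :
    Integrable (fun o => (∫ o', K o' o * ν o' ∂μ) * ν' o) μ := by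
  obtain ⟨C, hC⟩ := hKbdd
  exact hν'.bdd_mul (aestronglyMeasurable_integral_kernel_mul hK hν)
    (Filter.Eventually.of_forall (norm_integral_kernel_mul_le hC hν))

lemma integral_integral_kernel_mul (hK : Measurable fun p : O × O => K p.1 p.2)
    (hKbdd : ∃ C, ∀ x y, |K x y| ≤ C) {ν ν' : O → ℝ} (hν : Integrable ν μ)
    (hν' : Integrable ν' μ) :
    ∫ o, (∫ o', K o' o * ν o' ∂μ) * ν' o ∂μ = ∫ o, ∫ o', K o o' * ν o * ν' o' ∂μ ∂μ := by
  obtain ⟨C, hC⟩ := hKbdd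
  have hprod : Integrable (Function.uncurry fun o o' => K o' o * ν o' * ν' o) (μ.prod μ) := by
    refine ((hν'.mul_prod hν).bdd_mul (hK.comp measurable_swap).aestronglyMeasurable
      (c := C) (Filter.Eventually.of_forall fun p => hC p.2 p.1)).congr
      (Filter.Eventually.of_forall fun p => ?_)
    simp only [Function.uncurry, Function.comp_apply, Prod.fst_swap, Prod.snd_swap]
    ring
  simp_rw [← integral_mul_const]
  exact integral_integral_swap hprod

end BoundedKernel

section Emission

variable {O S : Type*} [MeasurableSpace O] [MeasurableSpace S] {μO : Measure O} {μS : Measure S}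
  [SFinite μO] [SFinite μS] {E : O → S → ℝ}

lemma integrable_prod_mul_of_integral_eq_one (hEmeas : Measurable fun p : O × S => E p.1 p.2)
    (hEnn : ∀ o s, 0 ≤ E o s) (hEint : ∀ s, ∫ o, E o s ∂μO = 1) {ψ : S → ℝ}
    (hψ : Integrable ψ μS) :
    Integrable (fun p : O × S => E p.1 p.2 * ψ p.2) (μO.prod μS) := by
  have hmeas : AEStronglyMeasurable (fun p : O × S => E p.1 p.2 * ψ p.2) (μO.prod μS) :=
    hEmeas.aestronglyMeasurable.mul hψ.1.comp_snd
  refine (integrable_prod_iff' hmeas).2 ⟨Filter.Eventually.of_forall fun t =>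
    (integrable_of_integral_eq_one (hEint t)).mul_const (ψ t), ?_⟩
  have hnorm : (fun t => ∫ o, ‖E o t * ψ t‖ ∂μO) = fun t => ‖ψ t‖ := by
    funext t
    simp_rw [norm_mul, Real.norm_of_nonneg (hEnn _ t)]
    rw [integral_mul_const, hEint t, one_mul]
  simpa only [hnorm] using hψ.norm

variable {ι : Type*} [Fintype ι]

lemma ae_integral_mul_sum {ψ : ι → S → ℝ}
    (hψ : ∀ j, Integrable (fun p : O × S => E p.1 p.2 * ψ j p.2) (μO.prod μS)) (c : ι → ℝ) :
    ∀ᵐ o ∂μO, ∫ t, E o t * (∑ j, c j • ψ j) t ∂μS = ∑ j, c j * ∫ t, E o t * ψ j t ∂μS := by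
  filter_upwards [ae_all_iff.2 fun j => (hψ j).prod_right_ae] with o ho
  have hsum t : E o t * (∑ j, c j • ψ j) t = ∑ j, c j * (E o t * ψ j t) := by
    simp only [Finset.sum_apply, Pi.smul_apply, smul_eq_mul, Finset.mul_sum, mul_left_comm]
  simp_rw [hsum]
  rw [integral_finsetSum _ fun j _ => (ho j).const_mul (c j)]
  simp_rw [integral_const_mul]

lemma integral_mul_integral_mul_of_mem_span {ψ : ι → S → ℝ}
    (hψ : ∀ j, Integrable (fun p : O × S => E p.1 p.2 * ψ j p.2) (μO.prod μS)) {w : O → ℝ}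
    (hw : ∀ j, Integrable (fun o => w o * ∫ t, E o t * ψ j t ∂μS) μO)
    (φ : (S → ℝ) →ₗ[ℝ] ℝ) (hφ : ∀ j, ∫ o, w o * ∫ t, E o t * ψ j t ∂μS ∂μO = φ (ψ j))
    {f : S → ℝ} (hf : f ∈ Submodule.span ℝ (Set.range ψ)) :
    ∫ o, w o * ∫ t, E o t * f t ∂μS ∂μO = φ f := by
  obtain ⟨c, rfl⟩ := (Submodule.mem_span_range_iff_exists_fun ℝ).1 hf
  calc ∫ o, w o * ∫ t, E o t * (∑ j, c j • ψ j) t ∂μS ∂μO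
      = ∫ o, ∑ j, c j * (w o * ∫ t, E o t * ψ j t ∂μS) ∂μO := by
        refine integral_congr_ae ?_
        filter_upwards [ae_integral_mul_sum hψ c] with o ho
        rw [ho, Finset.mul_sum]
        congr! 1 with j
        ring
    _ = ∑ j, c j * φ (ψ j) := by
        rw [integral_finsetSum _ fun j _ => (hw j).const_mul (c j)]
        simp_rw [integral_const_mul, hφ]
    _ = φ (∑ j, c j • ψ j) := by simp [map_sum]

end Emission

section Bridge

variable {O : Type*} [MeasurableSpace O] {μ : Measure O} {ι : Type*} [Fintype ι]
  {g : ι → O → ℝ}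

lemma integrable_sum_mul {ν : O → ℝ} (hg : ∀ j, Integrable (fun o => g j o * ν o) μ) (b : ι → ℝ) :
    Integrable (fun o => (∑ j, b j * g j o) * ν o) μ := by
  simp_rw [Finset.sum_mul, mul_assoc]
  exact integrable_finsetSum _ fun j _ => (hg j).const_mul (b j)

lemma integral_sum_mul {ν : O → ℝ} (hg : ∀ j, Integrable (fun o => g j o * ν o) μ) (b : ι → ℝ) :
    ∫ o, (∑ j, b j * g j o) * ν o ∂μ = ∑ j, b j * ∫ o, g j o * ν o ∂μ := by
  simp_rw [Finset.sum_mul, mul_assoc]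
  rw [integral_finsetSum _ fun j _ => (hg j).const_mul (b j)]
  simp_rw [integral_const_mul]

lemma integral_sum_vecMul_inv_mul [DecidableEq ι] {Λ : Matrix ι ι ℝ} (hΛ : IsUnit Λ.det)
    {ν : ι → O → ℝ} (hg : ∀ j ℓ, Integrable (fun o => g j o * ν ℓ o) μ)
    (hgν : ∀ j ℓ, ∫ o, g j o * ν ℓ o ∂μ = Λ j ℓ) (a : ι → ℝ) (ℓ : ι) :
    ∫ o, (∑ j, (a ᵥ* Λ⁻¹) j * g j o) * ν ℓ o ∂μ = a ℓ := by
  rw [integral_sum_mul (fun j => hg j ℓ)]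
  simp_rw [hgν]
  change ((a ᵥ* Λ⁻¹) ᵥ* Λ) ℓ = a ℓ
  rw [vecMul_vecMul, nonsing_inv_mul Λ hΛ, vecMul_one]

end Bridge

theorem stmt7_general {S O : Type*} [MeasurableSpace S] [MeasurableSpace O]
    (μS : Measure S) [SigmaFinite μS] (μO : Measure O) [SigmaFinite μO]
    (E : O → S → ℝ)
    (hEmeas : Measurable fun p : O × S => E p.1 p.2)
    (hEnn : ∀ o s, 0 ≤ E o s)
    (hEint : ∀ s, ∫ o, E o s ∂μO = 1)
    (d : ℕ) (ψ : Fin d → S → ℝ)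
    (hψint : ∀ j, ∫ s, ψ j s ∂μS = 1)
    (ν : Fin d → O → ℝ)
    (hν : ∀ j o, ν j o = ∫ s, E o s * ψ j s ∂μS)
    (Ktil : O → O → ℝ)
    (hKmeas : Measurable fun p : O × O => Ktil p.1 p.2)
    (hKbdd : ∃ C, ∀ x y, |Ktil x y| ≤ C)
    (Λ : Matrix (Fin d) (Fin d) ℝ)
    (hΛ : ∀ i j, Λ i j = ∫ o, (∫ o', Ktil o o' * ν i o * ν j o' ∂μO) ∂μO)
    (hΛinv : IsUnit Λ.det)
    (Z : S → O → ℝ)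
    (hZ : ∀ s o, Z s o =
      ∑ i, ∑ j, ψ i s * Λ⁻¹ i j * ∫ o', Ktil o' o * ν j o' ∂μO) :
    (∀ ℓ : Fin d, ∀ s : S, ∫ o, Z s o * ν ℓ o ∂μO = ψ ℓ s) ∧
    (∀ f : S → ℝ, f ∈ Submodule.span ℝ (Set.range ψ) →
      ∀ s : S, ∫ o, Z s o * (∫ t, E o t * f t ∂μS) ∂μO = f s) := by
  have hEψ j := integrable_prod_mul_of_integral_eq_one (μO := μO) hEmeas hEnn hEint
    (integrable_of_integral_eq_one (hψint j))
  have hνint j : Integrable (ν j) μO := by simpa only [← hν] using (hEψ j).integral_prod_left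
  set g : Fin d → O → ℝ := fun j o => ∫ o', Ktil o' o * ν j o' ∂μO
  have hg j ℓ : Integrable (fun o => g j o * ν ℓ o) μO :=
    integrable_integral_kernel_mul hKmeas hKbdd (hνint j) (hνint ℓ)
  have hgν j ℓ : ∫ o, g j o * ν ℓ o ∂μO = Λ j ℓ :=
    (integral_integral_kernel_mul hKmeas hKbdd (hνint j) (hνint ℓ)).trans (hΛ j ℓ).symm
  have hZeq s : Z s = fun o => ∑ j, ((fun i => ψ i s) ᵥ* Λ⁻¹) j * g j o := by
    funext o
    simp only [hZ, vecMul, dotProduct, Finset.sum_mul]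
    exact Finset.sum_comm
  have hZν ℓ s : ∫ o, Z s o * ν ℓ o ∂μO = ψ ℓ s := by
    rw [hZeq s]
    exact integral_sum_vecMul_inv_mul hΛinv hg hgν _ ℓ
  refine ⟨hZν, fun f hf s => ?_⟩
  refine integral_mul_integral_mul_of_mem_span hEψ (fun ℓ => ?_) (LinearMap.proj s)
    (fun ℓ => ?_) hf
  · simp only [← hν, hZeq s]
    exact integrable_sum_mul (fun j => hg j ℓ) _
  · simp only [← hν, LinearMap.proj_apply]
    exact hZν ℓ s

/-- Lemma A.3 (first claim): the explicitly constructed bridge kernel `Z` is a left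
inverse of the emission operator `𝕆` on the linear span of the basis state densities
`ψ_1, …, ψ_d`: `∫ Z(s,o) ν_ℓ(o) dμ_O(o) = ψ_ℓ(s)` and hence
`∫ Z(s,o) (𝕆f)(o) dμ_O(o) = f(s)` for every `f ∈ span{ψ_1,…,ψ_d}`. -/
theorem stmt7 {S O : Type*} [MeasurableSpace S] [MeasurableSpace O]
    (μS : Measure S) [SigmaFinite μS] (μO : Measure O) [SigmaFinite μO]
    (E : O → S → ℝ)
    (hEmeas : Measurable fun p : O × S => E p.1 p.2)
    (hEnn : ∀ o s, 0 ≤ E o s)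
    (hEint : ∀ s, ∫ o, E o s ∂μO = 1)
    (d : ℕ) (ψ : Fin d → S → ℝ)
    (hψmeas : ∀ j, Measurable (ψ j))
    (hψnn : ∀ j s, 0 ≤ ψ j s)
    (hψint : ∀ j, ∫ s, ψ j s ∂μS = 1)
    (ν : Fin d → O → ℝ)
    (hν : ∀ j o, ν j o = ∫ s, E o s * ψ j s ∂μS)
    (Ktil : O → O → ℝ)
    (hKmeas : Measurable fun p : O × O => Ktil p.1 p.2)
    (hKbdd : ∃ C, ∀ x y, |Ktil x y| ≤ C)
    (Λ : Matrix (Fin d) (Fin d) ℝ)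
    (hΛ : ∀ i j, Λ i j = ∫ o, (∫ o', Ktil o o' * ν i o * ν j o' ∂μO) ∂μO)
    (hΛinv : IsUnit Λ.det)
    (Z : S → O → ℝ)
    (hZ : ∀ s o, Z s o =
      ∑ i, ∑ j, ψ i s * Λ⁻¹ i j * ∫ o', Ktil o' o * ν j o' ∂μO) :
    (∀ ℓ : Fin d, ∀ s : S, ∫ o, Z s o * ν ℓ o ∂μO = ψ ℓ s) ∧
    (∀ f : S → ℝ, f ∈ Submodule.span ℝ (Set.range ψ) →
      ∀ s : S, ∫ o, Z s o * (∫ t, E o t * f t ∂μS) ∂μO = f s) :=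
  stmt7_general μS μO E hEmeas hEnn hEint d ψ hψint ν hν Ktil hKmeas hKbdd Λ hΛ hΛinv Z hZ
end
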